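/- arXiv:1511.02804 — 2 statements merged into one kernel-verified Lean document; each statement's English description precedes it below -/
import Mathlib

section
/- For every partition λ with inner corner contents x_0,…,x_m and outer corner contents y_1,…,y_m, writing λ^{i+} for λ with a box added at the inner corner of content x_i and H_ν for the product of all hook lengths of a partition ν, one has Σ_{i=0}^{m} (H_λ/H_{λ^{i+}})·x_i = 0 and Σ_{i=0}^{m} (H_λ/H_{λ^{i+}})·x_i² = |λ|. -/
open Finset

namespace PaperDefs

/-- Hook length of the box in row `i`, column `j` (0-indexed) of `μ`. -/
def hookLen (μ : YoungDiagram) (i j : ℕ) : ℕ :=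
  (μ.rowLen i - j) + (μ.colLen j - i) - 1

/-- Content of a box. -/
def content (c : ℕ × ℕ) : ℤ := (c.2 : ℤ) - (c.1 : ℤ)

/-- `z_i = 1` (horizontal edge) in the 01-sequence of `μ`; the 0's (vertical
edges) occur exactly at the positions `λ_{r+1} - (r+1) = rowLen r - (r+1)`,
which realizes the normalization `#{i ≥ 0 : z_i = 0} = #{i < 0 : z_i = 1}`. -/
def ZOne (μ : YoungDiagram) (i : ℤ) : Prop :=
  ∀ r : ℕ, i ≠ (μ.rowLen r : ℤ) - (r + 1)

/-- `μ` is a `t`-core: no hook length is divisible by `t`. -/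
def IsTCore (t : ℕ) (μ : YoungDiagram) : Prop :=
  ∀ c ∈ μ.cells, ¬ (t ∣ hookLen μ c.1 c.2)

/-- `ν` is obtained from `μ` by adding one `t`-hook: a pair
`(z_i, z_{i+t}) = (0, 1)` of the 01-sequence of `μ` is exchanged to `(1, 0)`. -/
def AddHook (t : ℕ) (μ ν : YoungDiagram) : Prop :=
  ∃ i : ℤ, ¬ ZOne μ i ∧ ZOne μ (i + (t : ℤ)) ∧
    (∀ j : ℤ, ZOne ν j ↔ (j = i ∨ (j ≠ i + (t : ℤ) ∧ ZOne μ j)))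

/-- `lam ≥_t μ` : `lam` is obtained from `μ` by successively adding `t`-hooks. -/
def GEt (t : ℕ) (μ lam : YoungDiagram) : Prop :=
  Relation.ReflTransGen (AddHook t) μ lam

/-- Number of saturated chains of `n` successive `t`-hook additions from `μ` to
`lam`; this equals `F_{λ/μ}` when `|λ/μ| = nt` and vanishes otherwise. -/
noncomputable def numChains (t n : ℕ) (μ lam : YoungDiagram) : ℕ :=
  Set.ncard {c : ℕ → YoungDiagram |
    c 0 = μ ∧ c n = lam ∧ ∀ k < n, AddHook t (c k) (c (k + 1))}

/-- `H_μ`, the product of all hook lengths of `μ`. -/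
def Hprod (μ : YoungDiagram) : ℚ :=
  ∏ c ∈ μ.cells, (hookLen μ c.1 c.2 : ℚ)

/-- `G_μ = 1 / ∏_{h ∈ 𝓗_t(μ)} h`. -/
def Gfun (t : ℕ) (μ : YoungDiagram) : ℚ :=
  1 / ∏ c ∈ μ.cells.filter (fun c => t ∣ hookLen μ c.1 c.2), (hookLen μ c.1 c.2 : ℚ)

/-- The `t`-difference operator `D_t`. -/
noncomputable def Dt (t : ℕ) (g : YoungDiagram → ℚ) (μ : YoungDiagram) : ℚ :=
  (∑ᶠ ν ∈ {ν : YoungDiagram | AddHook t μ ν}, g ν) - g μ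

/-- `P_g(n) = Σ_{λ ≥_t μ, |λ/μ| = nt} F_{λ/μ} g(λ)`. -/
noncomputable def Pg (t : ℕ) (μ : YoungDiagram) (g : YoungDiagram → ℚ) (n : ℕ) : ℚ :=
  ∑ᶠ lam : YoungDiagram, (numChains t n μ lam : ℚ) * g lam

/-- `ν` is obtained from `μ` by adding a single box. -/
def AddBox (μ ν : YoungDiagram) : Prop :=
  ∃ cell : ℕ × ℕ, cell ∉ μ.cells ∧ ν.cells = insert cell μ.cells

/-- `ν` is obtained from `μ` by adding a single box of content `k`. -/
def AddBoxAt (μ ν : YoungDiagram) (k : ℤ) : Prop :=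
  ∃ cell : ℕ × ℕ, cell ∉ μ.cells ∧ ν.cells = insert cell μ.cells ∧ content cell = k

/-- `μ` has an inner corner of content `k` (a box of content `k` can be added). -/
def InnerCorner (μ : YoungDiagram) (k : ℤ) : Prop :=
  ∃ ν : YoungDiagram, AddBoxAt μ ν k

/-- `μ` has an outer corner of content `k` (a box of content `k` can be removed). -/
def OuterCorner (μ : YoungDiagram) (k : ℤ) : Prop :=
  ∃ ν : YoungDiagram, AddBoxAt ν μ k

/-- `x 0 < x 1 < ⋯ < x m` are the contents of the inner corners of `μ` and
`y 1 < ⋯ < y m` those of the outer corners. -/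
def CornerData (μ : YoungDiagram) (m : ℕ) (x y : ℕ → ℤ) : Prop :=
  (∀ k : ℤ, InnerCorner μ k ↔ ∃ i ≤ m, x i = k) ∧
  (∀ k : ℤ, OuterCorner μ k ↔ ∃ j, 1 ≤ j ∧ j ≤ m ∧ y j = k) ∧
  (∀ i j, i < j → j ≤ m → x i < x j) ∧
  (∀ i j, 1 ≤ i → i < j → j ≤ m → y i < y j)

/-- `q_k = Σ_{i=0}^m x_i^k − Σ_{j=1}^m y_j^k`. -/
def qPow (m : ℕ) (x y : ℕ → ℤ) (k : ℕ) : ℤ :=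
  (∑ i ∈ range (m + 1), x i ^ k) - ∑ j ∈ range m, y (j + 1) ^ k

/-- Size of the `i`-th `t`-quotient of `lam`: boxes of `λ^i` correspond to
pairs `i' < j'` with `i' ≡ j' ≡ i (mod t)`, `z_{i'} = 1`, `z_{j'} = 0`. -/
noncomputable def quotientSize (t : ℕ) (lam : YoungDiagram) (i : ℕ) : ℕ :=
  Set.ncard {p : ℤ × ℤ | p.1 < p.2 ∧ p.1 % (t : ℤ) = (i : ℤ) ∧ p.2 % (t : ℤ) = (i : ℤ) ∧
    ZOne lam p.1 ∧ ¬ ZOne lam p.2}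

/-- The multiset of contents of the boxes of `μ`. -/
def contentsMultiset (μ : YoungDiagram) : Multiset ℤ :=
  μ.cells.val.map content

/-- The number of standard Young tableaux of shape `μ`, given by the
hook length formula `f_μ = |μ|! / H_μ`. -/
def fSYT (μ : YoungDiagram) : ℚ :=
  (Nat.factorial μ.card : ℚ) / Hprod μ

end PaperDefs

open PaperDefs

/-!
Read the boundary of `μ` as a lattice path in content coordinates: the vertical step at the end
of row `r` sits at `rowLen r - r - 1`, the horizontal step under column `j` at `j - colLen j`.
These positions partition `ℤ`, and the hook length of `(i, j)` is the difference of the two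
positions. Adding a box of content `k` raises by one exactly the hooks of its row and column;
rewritten in positions, the ratio of hook products telescopes to the classical
`H_μ / H_{μ^{i+}} = ∏_j (x_i - y_j) / ∏_{j ≠ i} (x_i - x_j)`.
These are the residues of `∏_j (z - y_j) / ∏_i (z - x_i)`, so Lagrange interpolation expresses
`∑_i c_i x_i ^ s` for `s ≤ 2` through power sums of the `x_i` and `y_j`, and telescoping along the
boundary once more gives `∑ x_i = ∑ y_j` and `∑ x_i ^ 2 - ∑ y_j ^ 2 = 2 |μ|`.
-/

namespace Finset

theorem image_erase_of_injOn {α β : Type*} [DecidableEq α] [DecidableEq β] {f : α → β}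
    {s : Finset α} (hf : Set.InjOn f s) {a : α} (ha : a ∈ s) :
    (s.erase a).image f = (s.image f).erase (f a) := by
  ext b
  simp only [mem_image, mem_erase]
  constructor
  · rintro ⟨c, ⟨hca, hc⟩, rfl⟩
    exact ⟨fun h => hca (hf hc ha h), c, hc, rfl⟩
  · rintro ⟨hb, c, hc, rfl⟩
    exact ⟨c, ⟨fun h => hb (h ▸ rfl), hc⟩, rfl⟩

theorem prod_mul_prod_sdiff_eq_prod_sdiff_mul_prod {ι M : Type*} [CommMonoid M]
    [DecidableEq ι] (s t : Finset ι) (f : ι → M) :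
    (∏ i ∈ s, f i) * ∏ i ∈ t \ s, f i = (∏ i ∈ s \ t, f i) * ∏ i ∈ t, f i := by
  rw [← prod_union disjoint_sdiff, union_sdiff_self_eq_union, ← sdiff_union_self_eq_union,
    prod_union sdiff_disjoint]

variable {K : Type*} [Field K]

theorem prod_Ico_div_mul (g : ℤ → K) {L M : ℤ} (hLM : L ≤ M) (hg : ∀ p ∈ Ico L M, g p ≠ 0) :
    (∏ p ∈ Ico L M, g (p + 1) / g p) * g L = g M := by
  induction M, hLM using Int.leInduction with
  | base => simp
  | succ M hLM ih =>
    rw [← insert_Ico_right_eq_Ico_add_one hLM, prod_insert right_notMem_Ico, mul_assoc,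
      ih fun p hp => hg p (Ico_subset_Ico_right (by omega) hp)]
    exact div_mul_cancel₀ _ (hg M (by simp [hLM]))

/-- Telescoping over `[L, M)` with the points of `S` removed: their factors reappear inverted on
the right. -/
theorem prod_Ico_sdiff_mul_prod_filter (g : ℤ → K) (S : Finset ℤ) {L M : ℤ} (hLM : L ≤ M)
    (hSL : ∀ v ∈ S, L ≤ v) (hMS : M + 1 ∉ S) (hg : ∀ p ∈ Ico L (M + 1), g p ≠ 0) :
    (∏ p ∈ Ico L M \ S, g (p + 1) / g p) * ∏ v ∈ S.filter (M + 1 < ·), g v / g (v + 1) =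
      g M / g L * ∏ v ∈ S.erase M, g v / g (v + 1) := by
  have hsub : S.filter (· < M) ⊆ Ico L M := fun v hv => by
    rw [mem_filter] at hv
    exact mem_Ico.mpr ⟨hSL v hv.1, hv.2⟩
  have hsdiff : Ico L M \ S.filter (· < M) = Ico L M \ S := by
    ext p; simp only [mem_sdiff, mem_filter, mem_Ico]; tauto
  have htel := prod_Ico_div_mul g hLM fun p hp => hg p (Ico_subset_Ico_right (by omega) hp)
  rw [← prod_sdiff hsub, hsdiff] at htel
  have herase : S.erase M = S.filter (· < M) ∪ S.filter (M + 1 < ·) := by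
    ext v
    simp only [mem_erase, mem_union, mem_filter]
    constructor
    · rintro ⟨hv, hvS⟩
      rcases lt_or_gt_of_ne hv with h | h
      · exact Or.inl ⟨hvS, h⟩
      · exact Or.inr ⟨hvS, lt_of_le_of_ne h (fun e => hMS (e ▸ hvS))⟩
    · rintro (⟨hvS, hv⟩ | ⟨hvS, hv⟩) <;> exact ⟨by omega, hvS⟩
  have hdisj : Disjoint (S.filter (· < M)) (S.filter (M + 1 < ·)) :=
    disjoint_filter.mpr fun v _ h1 h2 => by omega
  have hT : ∏ v ∈ S.filter (· < M), g v / g (v + 1) =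
      (∏ v ∈ S.filter (· < M), g (v + 1) / g v)⁻¹ := by
    rw [← prod_inv_distrib]; simp only [inv_div]
  have hM0 : g M ≠ 0 := hg M (mem_Ico.mpr ⟨hLM, by omega⟩)
  rw [← htel] at hM0
  have hT0 := right_ne_zero_of_mul (left_ne_zero_of_mul hM0)
  have hL0 := right_ne_zero_of_mul hM0
  rw [herase, prod_union hdisj, hT]
  field_simp
  linear_combination (∏ v ∈ S.filter (M + 1 < ·), g v / g (v + 1)) * htel

end Finset

namespace Lagrange

open Polynomial

variable {R ι : Type*} [CommRing R]

theorem coeff_X_sq_mul_nodal_card_add_two [Nontrivial R] (s : Finset ι) (v : ι → R) :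
    (X ^ 2 * nodal s v).coeff (#s + 2) = 1 := by
  rw [coeff_X_pow_mul, ← natDegree_nodal (v := v), ← leadingCoeff, nodal_monic.leadingCoeff]

theorem coeff_X_sq_mul_nodal (s : Finset ι) (v : ι → R) :
    (X ^ 2 * nodal s v).coeff (#s + 1) = -∑ i ∈ s, v i ∧
      2 * (X ^ 2 * nodal s v).coeff #s = (∑ i ∈ s, v i) ^ 2 - ∑ i ∈ s, v i ^ 2 := by
  classical
  nontriviality R
  induction s using Finset.induction_on with
  | empty => simp [nodal_empty, coeff_X_pow]
  | insert a s ha ih =>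
    have hmul : X ^ 2 * nodal (insert a s) v = X ^ 2 * nodal s v * (X - C (v a)) := by
      rw [nodal_insert_eq_nodal ha]; ring
    rw [hmul, card_insert_of_notMem ha, sum_insert ha, sum_insert ha, coeff_mul_X_sub_C,
      coeff_mul_X_sub_C, coeff_X_sq_mul_nodal_card_add_two, ih.1]
    exact ⟨by ring, by linear_combination ih.2⟩

variable {F κ : Type*} [Field F] [DecidableEq ι]

theorem nodal_eq_sum_C_mul_nodal_erase (s : Finset ι) (v : ι → F) (hv : Set.InjOn v s)
    (t : Finset κ) (w : κ → F) (hst : #t < #s) :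
    nodal t w = ∑ i ∈ s,
      C ((∏ j ∈ t, (v i - w j)) / ∏ j ∈ s.erase i, (v i - v j)) * nodal (s.erase i) v := by
  rw [eq_interpolate hv (f := nodal t w) (by rw [degree_nodal]; exact_mod_cast hst),
    interpolate_apply]
  refine sum_congr rfl fun i hi => ?_
  rw [basis_eq_prod_sub_inv_mul_nodal_div hi, ← nodal_erase_eq_nodal_div hi, ← mul_assoc, ← C_mul,
    eval_nodal, nodalWeight, prod_inv_distrib, div_eq_mul_inv]

/-- The `c i` are the residues of `∏ j ∈ t, (z - w j) / ∏ i ∈ s, (z - v i)`; the three identities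
come from the top three coefficients of `X ^ 2 * ∏ j ∈ t, (X - w j)`. -/
theorem partialFraction_moments (s : Finset ι) (v : ι → F) (hv : Set.InjOn v s)
    (t : Finset κ) (w : κ → F) (hst : #s = #t + 1) (c : ι → F)
    (hc : ∀ i ∈ s, c i = (∏ j ∈ t, (v i - w j)) / ∏ j ∈ s.erase i, (v i - v j)) :
    ∑ i ∈ s, c i = 1 ∧
    ∑ i ∈ s, c i * v i = ∑ i ∈ s, v i - ∑ j ∈ t, w j ∧
    2 * ∑ i ∈ s, c i * v i ^ 2 =
      (∑ i ∈ s, v i - ∑ j ∈ t, w j) ^ 2 + ∑ i ∈ s, v i ^ 2 - ∑ j ∈ t, w j ^ 2 := by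
  have hinterp : nodal t w = ∑ i ∈ s, C (c i) * nodal (s.erase i) v := by
    rw [nodal_eq_sum_C_mul_nodal_erase s v hv t w (by omega)]
    exact sum_congr rfl fun i hi => by rw [hc i hi]
  have hcoeff (n : ℕ) : (X ^ 2 * nodal t w).coeff n =
      ∑ i ∈ s, c i * (X ^ 2 * nodal (s.erase i) v).coeff n := by
    rw [hinterp, mul_sum, finsetSum_coeff]
    exact sum_congr rfl fun i _ => by rw [mul_left_comm, coeff_C_mul]
  set V := ∑ i ∈ s, v i
  set V₂ := ∑ i ∈ s, v i ^ 2
  have hcoeff_erase : ∀ i ∈ s, (X ^ 2 * nodal (s.erase i) v).coeff (#t + 2) = 1 ∧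
      (X ^ 2 * nodal (s.erase i) v).coeff (#t + 1) = v i - V ∧
      2 * (X ^ 2 * nodal (s.erase i) v).coeff #t = (V - v i) ^ 2 - (V₂ - v i ^ 2) := by
    intro i hi
    have hcard : #(s.erase i) = #t := by rw [card_erase_of_mem hi, hst]; rfl
    have herase (f : ι → F) : ∑ j ∈ s.erase i, f j = ∑ j ∈ s, f j - f i := by
      rw [← sum_erase_add _ _ hi]; ring
    rw [← hcard, coeff_X_sq_mul_nodal_card_add_two, (coeff_X_sq_mul_nodal _ v).1,
      (coeff_X_sq_mul_nodal _ v).2, herase, herase]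
    exact ⟨rfl, by ring, rfl⟩
  have h0 : ∑ i ∈ s, c i = 1 := by
    rw [← coeff_X_sq_mul_nodal_card_add_two t w, hcoeff]
    exact sum_congr rfl fun i hi => by rw [(hcoeff_erase i hi).1, mul_one]
  have h1 : ∑ i ∈ s, c i * v i = V - ∑ j ∈ t, w j := by
    have := (coeff_X_sq_mul_nodal t w).1
    rw [hcoeff, sum_congr rfl fun i hi => by rw [(hcoeff_erase i hi).2.1]] at this
    simp only [mul_sub, sum_sub_distrib, ← sum_mul, h0] at this
    linear_combination this
  refine ⟨h0, h1, ?_⟩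
  have h2 := (coeff_X_sq_mul_nodal t w).2
  rw [hcoeff, mul_sum, sum_congr rfl fun i hi => by
    rw [mul_left_comm, (hcoeff_erase i hi).2.2]] at h2
  have hexp : ∀ i ∈ s, c i * ((V - v i) ^ 2 - (V₂ - v i ^ 2)) =
      (V ^ 2 - V₂) * c i - 2 * V * (c i * v i) + 2 * (c i * v i ^ 2) := fun i _ => by ring
  rw [sum_congr rfl hexp, sum_add_distrib, sum_sub_distrib, ← mul_sum, ← mul_sum, ← mul_sum,
    h0, h1] at h2
  linear_combination h2

end Lagrange

namespace YoungDiagram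

variable {μ ν : YoungDiagram}

def rowEdge (μ : YoungDiagram) (i : ℕ) : ℤ := μ.rowLen i - i - 1

def colEdge (μ : YoungDiagram) (j : ℕ) : ℤ := j - μ.colLen j

theorem rowEdge_strictAnti : StrictAnti μ.rowEdge :=
  strictAnti_nat_of_succ_lt fun i => by
    have := μ.rowLen_anti i (i + 1) i.le_succ
    simp only [rowEdge]; omega

theorem colEdge_strictMono : StrictMono μ.colEdge :=
  strictMono_nat_of_lt_succ fun j => by
    have := μ.colLen_anti j (j + 1) j.le_succ
    simp only [colEdge]; push_cast; omega

theorem rowEdge_lt_colEdge_of_notMem {i j : ℕ} (h : (i, j) ∉ μ) : μ.rowEdge i < μ.colEdge j := by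
  have hrow := (μ.mem_iff_lt_rowLen (i := i) (j := j))
  have hcol := (μ.mem_iff_lt_colLen (i := i) (j := j))
  simp only [h, false_iff, not_lt] at hrow hcol
  simp only [rowEdge, colEdge]; omega

theorem colEdge_lt_rowEdge_iff {i j : ℕ} : μ.colEdge j < μ.rowEdge i ↔ (i, j) ∈ μ := by
  refine ⟨fun hlt => by_contra fun h => (rowEdge_lt_colEdge_of_notMem h).not_gt hlt, fun h => ?_⟩
  have hrow := μ.mem_iff_lt_rowLen.mp h
  have hcol := μ.mem_iff_lt_colLen.mp h
  simp only [rowEdge, colEdge]; omega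

theorem rowEdge_ne_colEdge (i j : ℕ) : μ.rowEdge i ≠ μ.colEdge j := by
  by_cases h : (i, j) ∈ μ
  · exact (colEdge_lt_rowEdge_iff.mpr h).ne'
  · exact (rowEdge_lt_colEdge_of_notMem h).ne

theorem hookLen_eq_rowEdge_sub_colEdge {i j : ℕ} (h : (i, j) ∈ μ) :
    (hookLen μ i j : ℤ) = μ.rowEdge i - μ.colEdge j := by
  have hrow := μ.mem_iff_lt_rowLen.mp h
  have hcol := μ.mem_iff_lt_colLen.mp h
  simp only [hookLen, rowEdge, colEdge]; omega

theorem neg_colLen_zero_le_colEdge (j : ℕ) : -(μ.colLen 0 : ℤ) ≤ μ.colEdge j := by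
  have := μ.colLen_anti 0 j j.zero_le
  simp only [colEdge]; omega

-- The empty row `colLen 0` is included: its edge accounts for the addable box in column `0`.
def rowEdges (μ : YoungDiagram) : Finset ℤ := (range (μ.colLen 0 + 1)).image μ.rowEdge

theorem mem_rowEdges {v : ℤ} : v ∈ μ.rowEdges ↔ ∃ r ≤ μ.colLen 0, μ.rowEdge r = v := by
  simp [rowEdges]

theorem card_rowEdges : #μ.rowEdges = μ.colLen 0 + 1 := by
  rw [rowEdges, card_image_of_injective _ rowEdge_strictAnti.injective, card_range]

theorem neg_colLen_zero_sub_one_le_of_mem_rowEdges {v : ℤ} (hv : v ∈ μ.rowEdges) :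
    -(μ.colLen 0 : ℤ) - 1 ≤ v := by
  obtain ⟨r, hr, rfl⟩ := mem_rowEdges.mp hv
  simp only [rowEdge]; omega

theorem rowEdges_union_image_colEdge {M : ℕ} (hM : μ.rowLen 0 ≤ M) :
    μ.rowEdges ∪ (range M).image μ.colEdge = Icc (-(μ.colLen 0 : ℤ) - 1) (M - 1) := by
  have hrow : μ.rowEdges ⊆ Icc (-(μ.colLen 0 : ℤ) - 1) (M - 1) := fun v hv => by
    obtain ⟨r, hr, rfl⟩ := mem_rowEdges.mp hv
    have := μ.rowLen_anti 0 r r.zero_le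
    simp only [mem_Icc, rowEdge]; omega
  have hcol : (range M).image μ.colEdge ⊆ Icc (-(μ.colLen 0 : ℤ) - 1) (M - 1) := fun p hp => by
    obtain ⟨j, hj, rfl⟩ := mem_image.mp hp
    have := neg_colLen_zero_le_colEdge (μ := μ) j
    simp only [mem_range] at hj
    simp only [mem_Icc, colEdge] at this ⊢; omega
  have hdisj : Disjoint μ.rowEdges ((range M).image μ.colEdge) := by
    simp only [disjoint_left, mem_rowEdges, mem_image]
    rintro _ ⟨r, -, rfl⟩ ⟨j, -, h⟩
    exact rowEdge_ne_colEdge r j h.symm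
  refine eq_of_subset_of_card_le (union_subset hrow hcol) ?_
  rw [card_union_of_disjoint hdisj, card_rowEdges,
    card_image_of_injective _ colEdge_strictMono.injective, card_range, Int.card_Icc]
  omega

theorem image_colEdge_range_rowLen (i : ℕ) :
    (range (μ.rowLen i)).image μ.colEdge =
      Ico (-(μ.colLen 0 : ℤ) - 1) (μ.rowEdge i) \ μ.rowEdges := by
  ext p
  simp only [mem_image, mem_range, mem_sdiff, mem_Ico]
  constructor
  · rintro ⟨j, hj, rfl⟩
    have := colEdge_lt_rowEdge_iff.mpr (μ.mem_iff_lt_rowLen.mpr hj)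
    have := neg_colLen_zero_le_colEdge (μ := μ) j
    refine ⟨⟨by omega, by omega⟩, fun h => ?_⟩
    obtain ⟨r, -, hr⟩ := mem_rowEdges.mp h
    exact rowEdge_ne_colEdge r j hr
  · rintro ⟨⟨hlo, hhi⟩, hp⟩
    have hi : μ.rowEdge i ≤ μ.rowLen 0 - 1 := by
      have := μ.rowLen_anti 0 i i.zero_le
      simp only [rowEdge]; omega
    have hmem : p ∈ Icc (-(μ.colLen 0 : ℤ) - 1) ((μ.rowLen 0 : ℕ) - 1) :=
      mem_Icc.mpr ⟨hlo, by omega⟩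
    rw [← rowEdges_union_image_colEdge le_rfl, mem_union, or_iff_right hp] at hmem
    obtain ⟨j, -, rfl⟩ := mem_image.mp hmem
    exact ⟨j, μ.mem_iff_lt_rowLen.mp (colEdge_lt_rowEdge_iff.mp (by omega)), rfl⟩

theorem image_rowEdge_range_colLen (j : ℕ) :
    (range (μ.colLen j)).image μ.rowEdge = μ.rowEdges.filter (μ.colEdge j < ·) := by
  ext v
  simp only [mem_image, mem_range, mem_filter, mem_rowEdges]
  constructor
  · rintro ⟨i, hi, rfl⟩
    have := μ.colLen_anti 0 j j.zero_le
    exact ⟨⟨i, by omega, rfl⟩, colEdge_lt_rowEdge_iff.mpr (μ.mem_iff_lt_colLen.mpr hi)⟩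
  · rintro ⟨⟨i, -, rfl⟩, hlt⟩
    exact ⟨i, μ.mem_iff_lt_colLen.mp (colEdge_lt_rowEdge_iff.mp hlt), rfl⟩

def innerContents (μ : YoungDiagram) : Finset ℤ := μ.rowEdges.image (· + 1) \ μ.rowEdges

-- `rowEdges \ (rowEdges + 1)` also contains the edge of the empty row, which is not a corner.
def outerContents (μ : YoungDiagram) : Finset ℤ :=
  (μ.rowEdges \ μ.rowEdges.image (· + 1)).erase (-(μ.colLen 0 : ℤ) - 1)

theorem neg_colLen_zero_sub_one_notMem_outerContents :
    -(μ.colLen 0 : ℤ) - 1 ∉ μ.outerContents :=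
  notMem_erase _ _

theorem rowEdges_sdiff_eq_insert_outerContents :
    μ.rowEdges \ μ.rowEdges.image (· + 1) = insert (-(μ.colLen 0 : ℤ) - 1) μ.outerContents := by
  refine (insert_erase
    (mem_sdiff.mpr ⟨mem_rowEdges.mpr ⟨μ.colLen 0, le_rfl, ?_⟩, fun h => ?_⟩)).symm
  · have : μ.rowLen (μ.colLen 0) = 0 := by
      by_contra h
      exact (lt_irrefl (μ.colLen 0)) (μ.mem_iff_lt_colLen.mp (μ.mem_iff_lt_rowLen.mpr (by omega)))
    simp only [rowEdge, this]; ring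
  · obtain ⟨v, hv, hv1⟩ := mem_image.mp h
    have := neg_colLen_zero_sub_one_le_of_mem_rowEdges hv
    omega

theorem card_innerContents : #μ.innerContents = #μ.outerContents + 1 := by
  have hinner := card_sdiff_add_card_inter (μ.rowEdges.image (· + 1)) μ.rowEdges
  have hrow := card_sdiff_add_card_inter μ.rowEdges (μ.rowEdges.image (· + 1))
  rw [card_image_of_injective _ (add_left_injective 1)] at hinner
  rw [rowEdges_sdiff_eq_insert_outerContents,
    card_insert_of_notMem neg_colLen_zero_sub_one_notMem_outerContents, inter_comm] at hrow
  rw [innerContents]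
  omega

theorem sum_innerContents_sub_sum_outerContents {R : Type*} [AddCommGroup R] (f : ℤ → R) :
    ∑ α ∈ μ.innerContents, f α - ∑ β ∈ μ.outerContents, f β =
      f (-(μ.colLen 0 : ℤ) - 1) +
        ∑ r ∈ range (μ.colLen 0 + 1), (f (μ.rowEdge r + 1) - f (μ.rowEdge r)) := by
  have h := sum_sdiff_sub_sum_sdiff (s₁ := μ.rowEdges) (s₂ := μ.rowEdges.image (· + 1)) (f := f)
  have hrowEdges (g : ℤ → R) :
      ∑ v ∈ μ.rowEdges, g v = ∑ r ∈ range (μ.colLen 0 + 1), g (μ.rowEdge r) :=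
    sum_image rowEdge_strictAnti.injective.injOn
  rw [rowEdges_sdiff_eq_insert_outerContents,
    sum_insert neg_colLen_zero_sub_one_notMem_outerContents,
    sum_image fun _ _ _ _ h => add_right_cancel h, hrowEdges, hrowEdges, sub_eq_iff_eq_add] at h
  rw [innerContents, h, sum_sub_distrib]
  abel

theorem card_eq_sum_rowLen : μ.card = ∑ r ∈ range (μ.colLen 0 + 1), μ.rowLen r := by
  rw [YoungDiagram.card, card_eq_sum_card_fiberwise (f := Prod.fst) (t := range (μ.colLen 0 + 1))]
  · exact sum_congr rfl fun r _ => (μ.rowLen_eq_card).symm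
  · intro c hc
    have := μ.mem_iff_lt_colLen.mp (μ.up_left_mem le_rfl c.2.zero_le ((μ.mem_cells c).mp hc))
    simp only [coe_range, Set.mem_Iio]; omega

theorem sum_innerContents_eq_sum_outerContents {R : Type*} [CommRing R] :
    ∑ α ∈ μ.innerContents, (α : R) = ∑ β ∈ μ.outerContents, (β : R) := by
  have := sum_innerContents_sub_sum_outerContents (μ := μ) ((↑) : ℤ → R)
  simp only [Int.cast_add, Int.cast_one, add_sub_cancel_left, sum_const, card_range,
    nsmul_eq_mul] at this
  push_cast at this
  linear_combination this

theorem sum_sq_innerContents_eq {R : Type*} [CommRing R] :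
    ∑ α ∈ μ.innerContents, (α : R) ^ 2 = ∑ β ∈ μ.outerContents, (β : R) ^ 2 + 2 * μ.card := by
  rw [← sub_eq_iff_eq_add', sum_innerContents_sub_sum_outerContents (fun v : ℤ => (v : R) ^ 2),
    card_eq_sum_rowLen]
  have hodd (n : ℕ) : ∑ r ∈ range n, (2 * (r : R) + 1) = n ^ 2 := by
    induction n with
    | zero => simp
    | succ n ih => rw [sum_range_succ, ih]; push_cast; ring
  have hterm : ∀ r ∈ range (μ.colLen 0 + 1),
      (((μ.rowEdge r + 1 : ℤ) : R) ^ 2 - ((μ.rowEdge r : ℤ) : R) ^ 2) =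
        2 * (μ.rowLen r : R) - (2 * r + 1) := fun r _ => by simp only [rowEdge]; push_cast; ring
  rw [sum_congr rfl hterm, sum_sub_distrib, ← mul_sum, hodd]
  push_cast
  ring

theorem exists_cells_eq_insert {c : ℕ × ℕ} (h : ∀ c' < c, c' ∈ μ) :
    ∃ ν : YoungDiagram, ν.cells = insert c μ.cells := by
  refine ⟨⟨insert c μ.cells, fun x y hyx hx => ?_⟩, rfl⟩
  rw [coe_insert, Set.mem_insert_iff] at hx ⊢
  rcases hx with rfl | hx
  · exact (eq_or_lt_of_le hyx).imp id fun hlt => (μ.mem_cells _).mpr (h y hlt)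
  · exact Or.inr (μ.isLowerSet hyx hx)

section AddCell

variable {a b : ℕ} (hν : ν.cells = insert (a, b) μ.cells) (hab : (a, b) ∉ μ.cells)
include hν hab

theorem rowLen_of_cells_eq_insert (i : ℕ) :
    ν.rowLen i = μ.rowLen i + if a = i then 1 else 0 := by
  rw [rowLen_eq_card, rowLen_eq_card, row, row, hν, filter_insert]
  split_ifs
  · exact card_insert_of_notMem fun h => hab (mem_filter.mp h).1
  · rfl

theorem colLen_of_cells_eq_insert (j : ℕ) :
    ν.colLen j = μ.colLen j + if b = j then 1 else 0 := by
  rw [colLen_eq_card, colLen_eq_card, col, col, hν, filter_insert]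
  split_ifs
  · exact card_insert_of_notMem fun h => hab (mem_filter.mp h).1
  · rfl

theorem rowLen_eq_of_cells_eq_insert : μ.rowLen a = b := by
  have hlen := rowLen_of_cells_eq_insert hν hab a
  have hmem : (a, b) ∈ ν := by rw [← mem_cells, hν]; exact mem_insert_self _ _
  rw [mem_cells, mem_iff_lt_rowLen] at hab
  rw [mem_iff_lt_rowLen, hlen, if_pos rfl] at hmem
  omega

theorem colLen_eq_of_cells_eq_insert : μ.colLen b = a := by
  have hlen := colLen_of_cells_eq_insert hν hab b
  have hmem : (a, b) ∈ ν := by rw [← mem_cells, hν]; exact mem_insert_self _ _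
  rw [mem_cells, mem_iff_lt_colLen] at hab
  rw [mem_iff_lt_colLen, hlen, if_pos rfl] at hmem
  omega

theorem rowEdge_eq_colEdge_sub_one : μ.rowEdge a = μ.colEdge b - 1 := by
  simp only [rowEdge, colEdge, rowLen_eq_of_cells_eq_insert hν hab,
    colLen_eq_of_cells_eq_insert hν hab]

theorem content_eq_colEdge : content (a, b) = μ.colEdge b := by
  simp [content, colEdge, colLen_eq_of_cells_eq_insert hν hab]

theorem hookLen_of_cells_eq_insert {i j : ℕ} (hij : (i, j) ∈ μ) :
    hookLen ν i j = hookLen μ i j + (if a = i then 1 else 0) + (if b = j then 1 else 0) := by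
  simp only [hookLen, rowLen_of_cells_eq_insert hν hab, colLen_of_cells_eq_insert hν hab]
  have := μ.mem_iff_lt_rowLen.mp hij
  have := μ.mem_iff_lt_colLen.mp hij
  split_ifs <;> omega

theorem hookLen_of_cells_eq_insert_self : hookLen ν a b = 1 := by
  simp only [hookLen, rowLen_of_cells_eq_insert hν hab, colLen_of_cells_eq_insert hν hab,
    rowLen_eq_of_cells_eq_insert hν hab, colLen_eq_of_cells_eq_insert hν hab, if_pos]
  omega

theorem Hprod_div_Hprod_of_cells_eq_insert :
    Hprod μ / Hprod ν =
      ∏ c ∈ μ.row a ∪ μ.col b, (hookLen μ c.1 c.2 : ℚ) / (hookLen μ c.1 c.2 + 1) := by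
  have hne {c : ℕ × ℕ} (hc : c ∈ μ) : (hookLen μ c.1 c.2 : ℚ) ≠ 0 := by
    have := colEdge_lt_rowEdge_iff.mpr hc
    have := hookLen_eq_rowEdge_sub_colEdge hc
    exact Nat.cast_ne_zero.mpr (by omega)
  rw [Hprod, Hprod, hν, prod_insert hab, hookLen_of_cells_eq_insert_self hν hab, Nat.cast_one,
    one_mul, ← prod_div_distrib]
  symm
  calc ∏ c ∈ μ.row a ∪ μ.col b, (hookLen μ c.1 c.2 : ℚ) / (hookLen μ c.1 c.2 + 1)
      = ∏ c ∈ μ.row a ∪ μ.col b, (hookLen μ c.1 c.2 : ℚ) / hookLen ν c.1 c.2 := by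
        refine prod_congr rfl fun c hc => ?_
        simp only [mem_union, mem_row_iff, mem_col_iff] at hc
        have hc' : ¬(a = c.1 ∧ b = c.2) := fun ⟨h1, h2⟩ => hab (by rw [mem_cells, h1, h2]; tauto)
        rw [hookLen_of_cells_eq_insert hν hab (by tauto)]
        split_ifs with h1 h2 h2
        · exact absurd ⟨h1, h2⟩ hc'
        · simp
        · simp
        · rcases hc with ⟨-, h⟩ | ⟨-, h⟩
          exacts [absurd h.symm h1, absurd h.symm h2]
    _ = ∏ c ∈ μ.cells, (hookLen μ c.1 c.2 : ℚ) / hookLen ν c.1 c.2 := by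
        refine prod_subset (union_subset (filter_subset _ _) (filter_subset _ _)) fun c hc hrc => ?_
        rw [mem_cells] at hc
        simp only [mem_union, mem_row_iff, mem_col_iff, not_or, not_and] at hrc
        rw [hookLen_of_cells_eq_insert hν hab hc, if_neg (Ne.symm (hrc.1 hc)),
          if_neg (Ne.symm (hrc.2 hc)), add_zero, add_zero, div_self (hne hc)]

theorem Hprod_div_Hprod_eq_prod_edges :
    Hprod μ / Hprod ν =
      (∏ p ∈ Ico (-(μ.colLen 0 : ℤ) - 1) (μ.rowEdge a) \ μ.rowEdges,
        ((μ.rowEdge a : ℚ) - p) / (μ.rowEdge a - p + 1)) *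
      ∏ v ∈ μ.rowEdges.filter (μ.colEdge b < ·),
        ((v : ℚ) - μ.colEdge b) / (v - μ.colEdge b + 1) := by
  have hdisj : Disjoint (μ.row a) (μ.col b) := by
    simp only [disjoint_left, mem_row_iff, mem_col_iff]
    rintro ⟨i, j⟩ ⟨hmem, rfl⟩ ⟨-, rfl⟩
    exact hab ((μ.mem_cells _).mpr hmem)
  have hcast {i j : ℕ} (h : (i, j) ∈ μ) :
      (hookLen μ i j : ℚ) = (μ.rowEdge i : ℚ) - μ.colEdge j := by
    exact_mod_cast hookLen_eq_rowEdge_sub_colEdge h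
  rw [Hprod_div_Hprod_of_cells_eq_insert hν hab, prod_union hdisj, row_eq_prod, col_eq_prod,
    prod_product, prod_singleton, prod_product_right, prod_singleton,
    ← image_colEdge_range_rowLen, ← image_rowEdge_range_colLen,
    prod_image colEdge_strictMono.injective.injOn, prod_image rowEdge_strictAnti.injective.injOn]
  congr 1
  · exact prod_congr rfl fun j hj => by rw [hcast (μ.mem_iff_lt_rowLen.mpr (mem_range.mp hj))]
  · exact prod_congr rfl fun i hi => by rw [hcast (μ.mem_iff_lt_colLen.mpr (mem_range.mp hi))]

theorem Hprod_div_Hprod_eq_prod_rowEdges_erase :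
    Hprod μ / Hprod ν =
      (∏ v ∈ μ.rowEdges.erase (μ.colEdge b - 1),
        ((μ.colEdge b : ℚ) - v) / (μ.colEdge b - (v + 1))) / (μ.colEdge b + μ.colLen 0 + 1) := by
  have hLk : -(μ.colLen 0 : ℤ) - 1 ≤ μ.colEdge b - 1 := by
    rw [← rowEdge_eq_colEdge_sub_one hν hab]
    have := colLen_eq_of_cells_eq_insert hν hab ▸ μ.colLen_anti 0 b b.zero_le
    simp only [rowEdge]; omega
  have hkS : μ.colEdge b - 1 + 1 ∉ μ.rowEdges := fun h => by
    obtain ⟨r, -, hr⟩ := mem_rowEdges.mp h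
    exact rowEdge_ne_colEdge r b (by rw [hr]; ring)
  rw [Hprod_div_Hprod_eq_prod_edges hν hab, rowEdge_eq_colEdge_sub_one hν hab]
  set k := μ.colEdge b
  obtain ⟨g, hg⟩ : ∃ g : ℤ → ℚ, ∀ p, g p = k - p := ⟨_, fun _ => rfl⟩
  have key := prod_Ico_sdiff_mul_prod_filter g μ.rowEdges hLk
    (fun v hv => neg_colLen_zero_sub_one_le_of_mem_rowEdges hv) hkS fun p hp => by
      rw [hg]; exact sub_ne_zero.mpr (by rw [mem_Ico] at hp; exact_mod_cast (by omega : k ≠ p))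
  simp only [hg, sub_add_cancel] at key
  push_cast at key
  calc _ = (∏ p ∈ Ico (-(μ.colLen 0 : ℤ) - 1) (k - 1) \ μ.rowEdges,
          ((k : ℚ) - (p + 1)) / (k - p)) *
        ∏ v ∈ μ.rowEdges.filter (k < ·), ((k : ℚ) - v) / (k - (v + 1)) := by
        congr 1 <;> refine prod_congr rfl fun p _ => ?_
        · push_cast; congr 1 <;> ring
        · rw [← neg_div_neg_eq]; congr 1 <;> ring
    _ = _ := by rw [key, div_mul_eq_mul_div]; congr 1 <;> ring

theorem Hprod_div_Hprod_eq_prod_contents :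
    Hprod μ / Hprod ν =
      (∏ β ∈ μ.outerContents, ((μ.colEdge b : ℚ) - β)) /
        ∏ α ∈ μ.innerContents.erase (μ.colEdge b), ((μ.colEdge b : ℚ) - α) := by
  have hkS : μ.colEdge b ∉ μ.rowEdges := fun h => by
    obtain ⟨r, -, hr⟩ := mem_rowEdges.mp h
    exact rowEdge_ne_colEdge r b hr
  rw [Hprod_div_Hprod_eq_prod_rowEdges_erase hν hab, prod_div_distrib]
  set k := μ.colEdge b
  set S := μ.rowEdges
  set U := (S.image (· + 1)).erase k
  have hnum : ∏ v ∈ S.erase (k - 1), ((k : ℚ) - v) = ∏ v ∈ S, ((k : ℚ) - v) :=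
    prod_erase _ (by push_cast; ring)
  have hden : ∏ v ∈ S.erase (k - 1), ((k : ℚ) - (v + 1)) = ∏ w ∈ U, ((k : ℚ) - w) := by
    rw [show U = (S.erase (k - 1)).image (· + 1) by
      rw [image_erase (add_left_injective 1), sub_add_cancel],
      prod_image fun _ _ _ _ h => add_right_cancel h]
    push_cast; rfl
  have hcross := prod_mul_prod_sdiff_eq_prod_sdiff_mul_prod S U (fun v => (k : ℚ) - v)
  rw [show U \ S = μ.innerContents.erase k from erase_sdiff_comm _ _ _,
    show S \ U = S \ S.image (· + 1) by
      ext v; simp only [U, mem_sdiff, mem_erase]; constructor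
      · rintro ⟨hv, h⟩; exact ⟨hv, fun h' => h ⟨fun e => hkS (e ▸ hv), h'⟩⟩
      · rintro ⟨hv, h⟩; exact ⟨hv, fun h' => h h'.2⟩,
    rowEdges_sdiff_eq_insert_outerContents,
    prod_insert neg_colLen_zero_sub_one_notMem_outerContents] at hcross
  have hne {s : Finset ℤ} : ∏ w ∈ s.erase k, ((k : ℚ) - w) ≠ 0 :=
    prod_ne_zero_iff.mpr fun w hw => sub_ne_zero.mpr (by exact_mod_cast (ne_of_mem_erase hw).symm)
  have hL : (k : ℚ) + μ.colLen 0 + 1 ≠ 0 := by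
    have : (-(μ.colLen 0 : ℤ) : ℚ) ≤ k := by exact_mod_cast neg_colLen_zero_le_colEdge b
    push_cast at this
    linarith
  push_cast at hcross
  rw [hnum, hden, div_div, div_eq_div_iff (mul_ne_zero hne hL) hne]
  linear_combination hcross

end AddCell

theorem Hprod_div_Hprod_of_addBoxAt {k : ℤ} (h : AddBoxAt μ ν k) :
    Hprod μ / Hprod ν =
      (∏ β ∈ μ.outerContents, ((k : ℚ) - β)) / ∏ α ∈ μ.innerContents.erase k, ((k : ℚ) - α) := by
  obtain ⟨⟨a, b⟩, hab, hν, rfl⟩ := h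
  rw [content_eq_colEdge hν hab]
  exact Hprod_div_Hprod_eq_prod_contents hν hab

theorem innerCorner_iff {k : ℤ} : InnerCorner μ k ↔ k ∈ μ.innerContents := by
  rw [innerContents, mem_sdiff, mem_image]
  constructor
  · rintro ⟨ν, ⟨a, b⟩, hab, hν, rfl⟩
    rw [content_eq_colEdge hν hab]
    refine ⟨⟨μ.rowEdge a, mem_rowEdges.mpr ⟨a, ?_, rfl⟩, ?_⟩, fun h => ?_⟩
    · exact colLen_eq_of_cells_eq_insert hν hab ▸ μ.colLen_anti 0 b b.zero_le
    · rw [rowEdge_eq_colEdge_sub_one hν hab, sub_add_cancel]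
    · obtain ⟨r, -, hr⟩ := mem_rowEdges.mp h
      exact rowEdge_ne_colEdge r b hr
  · rintro ⟨⟨v, hv, rfl⟩, hkS⟩
    obtain ⟨a, ha, rfl⟩ := mem_rowEdges.mp hv
    have habove {i : ℕ} (hi : i < a) : (i, μ.rowLen a) ∈ μ := by
      have h1 : μ.rowEdge a < μ.rowEdge (a - 1) := rowEdge_strictAnti (by omega)
      have h2 : μ.rowEdge (a - 1) ≠ μ.rowEdge a + 1 := fun h =>
        hkS (mem_rowEdges.mpr ⟨a - 1, by omega, h⟩)
      refine μ.up_left_mem (show i ≤ a - 1 by omega) le_rfl (μ.mem_iff_lt_rowLen.mpr ?_)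
      simp only [rowEdge] at h1 h2
      omega
    obtain ⟨ν, hν⟩ := exists_cells_eq_insert (μ := μ) (c := (a, μ.rowLen a)) fun ⟨i, j⟩ hlt => by
      rcases Prod.lt_iff.mp hlt with ⟨hi, hj⟩ | ⟨hi, hj⟩
      · exact μ.up_left_mem le_rfl hj (habove hi)
      · rcases hi.lt_or_eq with hi | rfl
        · exact μ.up_left_mem le_rfl hj.le (habove hi)
        · exact μ.mem_iff_lt_rowLen.mpr hj
    refine ⟨ν, (a, μ.rowLen a), fun h => ?_, hν, ?_⟩
    · exact lt_irrefl _ (μ.mem_iff_lt_rowLen.mp ((μ.mem_cells _).mp h))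
    · simp only [content, rowEdge]; ring

end YoungDiagram

open YoungDiagram

theorem stmt6 (μ : YoungDiagram) (m : ℕ) (x y : ℕ → ℤ) (h : CornerData μ m x y)
    (lamp : ℕ → YoungDiagram) (hlamp : ∀ i ≤ m, AddBoxAt μ (lamp i) (x i)) :
    (∑ i ∈ range (m + 1), (Hprod μ / Hprod (lamp i)) * (x i : ℚ)) = 0 ∧
    (∑ i ∈ range (m + 1), (Hprod μ / Hprod (lamp i)) * (x i : ℚ) ^ 2) = (μ.card : ℚ) := by
  obtain ⟨hinner, -, hx, -⟩ := h
  have hinj : Set.InjOn x (range (m + 1)) := StrictMonoOn.injOn fun i _ j hj hij =>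
    hx i j hij (Nat.lt_succ_iff.mp (by simpa using hj))
  have himage : (range (m + 1)).image x = μ.innerContents := by
    ext k
    rw [← innerCorner_iff, hinner]
    simp
  have hcard : #(range (m + 1)) = #μ.outerContents + 1 := by
    rw [← card_innerContents, ← himage, card_image_of_injOn hinj]
  have hsum (f : ℤ → ℚ) : ∑ i ∈ range (m + 1), f (x i) = ∑ α ∈ μ.innerContents, f α := by
    rw [← himage, sum_image hinj]
  obtain ⟨-, h1, h2⟩ := Lagrange.partialFraction_moments (range (m + 1)) (fun i => (x i : ℚ))
    (Int.cast_injective.comp_injOn hinj) μ.outerContents (fun β => (β : ℚ)) hcard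
    (fun i => Hprod μ / Hprod (lamp i)) fun i hi => by
      rw [Hprod_div_Hprod_of_addBoxAt (hlamp i (Nat.lt_succ_iff.mp (mem_range.mp hi))), ← himage,
        ← image_erase_of_injOn hinj hi, prod_image (hinj.mono (coe_subset.mpr (erase_subset i _)))]
  rw [hsum (fun α => (α : ℚ)), sum_innerContents_eq_sum_outerContents, sub_self] at h1
  rw [hsum (fun α => (α : ℚ)), hsum (fun α => (α : ℚ) ^ 2), sum_innerContents_eq_sum_outerContents,
    sum_sq_innerContents_eq] at h2
  exact ⟨h1, by linear_combination h2 / 2⟩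
end

section
/- Let t be a positive integer, μ a t-core partition, and λ a partition with t-core equal to μ and |λ| = |μ| + nt. Then for every 0 ≤ k ≤ t−1, (#{□ ∈ λ : h_□ ≡ k mod t} + #{□ ∈ λ : h_□ ≡ −k mod t}) − (#{□ ∈ μ : h_□ ≡ k mod t} + #{□ ∈ μ : h_□ ≡ −k mod t}) = 2n. -/
open Finset

open PaperDefs

/-!
Read a partition through its 01-sequence: its cells are the pairs `a < b` with a `1` at `a` and
a `0` at `b`, the hook length being `b - a`. Adding a `t`-hook at `u` applies the transposition
`σ = (u, u + t)` to the sequence. As `σ` preserves residues mod `t`, the only change in the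
residue-`r` hooks comes from pairs whose order `σ` reverses: the new ones are `(u + t, b)` with
a `0` at `b ∈ [u, u + t)`, `b - u ≡ r`, and `(a, u)` with a `1` at `a ∈ [u, u + t)`,
`a - u ≡ -r`. For `r = k` and `r = -k` together, each `x ∈ [u, u + t)` with `x - u ≡ ±k` is
counted once whether it carries a `0` or a `1`, so every hook adds exactly `2`; it also adds
exactly `t` cells, hence there are `n` hooks.
-/

lemma Int.swap_lt_swap_iff {t u a b : ℤ} (ht : 0 < t) (ha : a ≠ u) (hb : b ≠ u + t) :
    Equiv.swap u (u + t) a < Equiv.swap u (u + t) b ↔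
      a < b ∨ (a = u + t ∧ u ≤ b ∧ b < u + t) ∨ (b = u ∧ u ≤ a ∧ a < u + t) := by
  rw [Equiv.swap_apply_def, Equiv.swap_apply_def]
  split_ifs <;> omega

lemma Function.Periodic.swap_sub_swap {P : ℤ → Prop} {t u : ℤ} (hP : Function.Periodic P t)
    (a b : ℤ) :
    P (Equiv.swap u (u + t) b - Equiv.swap u (u + t) a) = P (b - a) := by
  have hshift : ∀ x, ∃ m : ℤ, Equiv.swap u (u + t) x = x + m * t := fun x => by
    rw [Equiv.swap_apply_def]
    split_ifs with h₁ h₂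
    · exact ⟨1, by rw [h₁]; ring⟩
    · exact ⟨-1, by rw [h₂]; ring⟩
    · exact ⟨0, by ring⟩
  obtain ⟨ma, hma⟩ := hshift a
  obtain ⟨mb, hmb⟩ := hshift b
  rw [hma, hmb, show b + mb * t - (a + ma * t) = b - a + (mb - ma) * t by ring]
  simpa using hP.int_mul (mb - ma) (b - a)

lemma Int.periodic_modEq (t r : ℤ) : Function.Periodic (· ≡ r [ZMOD t]) t :=
  fun _ => propext ⟨Int.add_modEq_right.symm.trans, Int.add_modEq_right.trans⟩

lemma Int.card_filter_Ico_sub_modEq {t : ℤ} (ht : 0 < t) (u c : ℤ) :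
    #{x ∈ Ico u (u + t) | x - u ≡ c [ZMOD t]} = 1 := by
  have := Int.emod_nonneg c ht.ne'
  have := Int.emod_lt_of_pos c ht
  rw [card_eq_one]
  refine ⟨u + c % t, eq_singleton_iff_unique_mem.2 ⟨?_, fun x hx => ?_⟩⟩
  · rw [mem_filter, mem_Ico, add_sub_cancel_left]
    exact ⟨⟨by omega, by omega⟩, Int.mod_modEq c t⟩
  · rw [mem_filter, mem_Ico] at hx
    obtain ⟨⟨hx₁, hx₂⟩, hxc⟩ := hx
    rw [Int.ModEq, Int.emod_eq_of_lt (by omega) (by omega)] at hxc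
    omega

lemma Finset.card_filter_notMem_add_card_filter_mem {α : Type*} (s : Finset α) (S : Set α)
    [DecidablePred (· ∈ S)] (Q : α → Prop) [DecidablePred Q] :
    #{x ∈ s | x ∉ S ∧ Q x} + #{x ∈ s | x ∈ S ∧ Q x} = #{x ∈ s | Q x} := by
  rw [← card_filter_add_card_filter_not (s := {x ∈ s | Q x}) (· ∉ S), filter_filter,
    filter_filter]
  simp only [not_not, and_comm]

lemma Nat.mod_eq_iff_intCast_modEq {n t k : ℕ} (hk : k < t) :
    n % t = k ↔ (n : ℤ) ≡ k [ZMOD t] := by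
  rw [Int.natCast_modEq_iff, Nat.ModEq, Nat.mod_eq_of_lt hk]

lemma Nat.mod_eq_sub_mod_iff_intCast_modEq_neg {n t k : ℕ} (hk : k ≤ t) :
    n % t = (t - k) % t ↔ (n : ℤ) ≡ -k [ZMOD t] := by
  have hneg : ((t - k : ℕ) : ℤ) ≡ -k [ZMOD t] := by
    rw [Nat.cast_sub hk, sub_eq_add_neg]
    exact Int.add_modEq_left
  change n ≡ t - k [MOD t] ↔ _
  rw [← Int.natCast_modEq_iff]
  exact ⟨fun h => h.trans hneg, fun h => h.trans hneg.symm⟩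

namespace PaperDefs

open Function

def hookPairs (S : Set ℤ) (P : ℤ → Prop) : Set (ℤ × ℤ) :=
  {p | p.1 ∈ S ∧ p.2 ∉ S ∧ p.1 < p.2 ∧ P (p.2 - p.1)}

section Swap

variable {S : Set ℤ} {P : ℤ → Prop} {t u : ℤ} [DecidablePred (· ∈ S)] [DecidablePred P]

lemma setOf_swap_lt_eq_hookPairs_union (ht : 0 < t) (hP : Periodic P t) (hu : u ∉ S)
    (hv : u + t ∈ S) :
    {p : ℤ × ℤ | p.1 ∈ S ∧ p.2 ∉ S ∧
        Equiv.swap u (u + t) p.1 < Equiv.swap u (u + t) p.2 ∧ P (p.2 - p.1)} =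
      hookPairs S P ∪ ↑({b ∈ Ico u (u + t) | b ∉ S ∧ P (b - u)}.image (u + t, ·)) ∪
        ↑({a ∈ Ico u (u + t) | a ∈ S ∧ P (u - a)}.image (·, u)) := by
  have hlt : ∀ {a b}, a ∈ S → b ∉ S → _ := fun ha hb =>
    Int.swap_lt_swap_iff ht (ne_of_mem_of_not_mem ha hu) (ne_of_mem_of_not_mem hv hb).symm
  ext ⟨a, b⟩
  simp only [Set.mem_ofPred_eq, Set.mem_union, hookPairs, coe_image, Set.mem_image, mem_coe,
    mem_filter, mem_Ico, Prod.mk.injEq]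
  constructor
  · rintro ⟨ha, hb, hσ, hab⟩
    rcases (hlt ha hb).1 hσ with h | ⟨rfl, h₁, h₂⟩ | ⟨rfl, h₁, h₂⟩
    · exact Or.inl (Or.inl ⟨ha, hb, h, hab⟩)
    · refine Or.inl (Or.inr ⟨b, ⟨⟨h₁, h₂⟩, hb, ?_⟩, rfl, rfl⟩)
      rwa [← hP.sub_eq, sub_sub]
    · exact Or.inr ⟨a, ⟨⟨h₁, h₂⟩, ha, hab⟩, rfl, rfl⟩
  · rintro ((⟨ha, hb, hab, hP'⟩ | ⟨b, ⟨⟨h₁, h₂⟩, hb, hP'⟩, rfl, rfl⟩) |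
        ⟨a, ⟨⟨h₁, h₂⟩, ha, hP'⟩, rfl, rfl⟩)
    · exact ⟨ha, hb, (hlt ha hb).2 (Or.inl hab), hP'⟩
    · refine ⟨hv, hb, (hlt hv hb).2 (Or.inr (Or.inl ⟨rfl, h₁, h₂⟩)), ?_⟩
      rwa [← hP.sub_eq, sub_sub] at hP'
    · exact ⟨ha, hu, (hlt ha hu).2 (Or.inr (Or.inr ⟨rfl, h₁, h₂⟩)), hP'⟩

lemma ncard_hookPairs_swap_preimage (ht : 0 < t) (hP : Periodic P t) (hu : u ∉ S)
    (hv : u + t ∈ S) (hfin : (hookPairs S P).Finite) :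
    (hookPairs (Equiv.swap u (u + t) ⁻¹' S) P).ncard =
      (hookPairs S P).ncard + #{b ∈ Ico u (u + t) | b ∉ S ∧ P (b - u)} +
        #{a ∈ Ico u (u + t) | a ∈ S ∧ P (u - a)} := by
  set σ := Equiv.swap u (u + t)
  have hpre : hookPairs (σ ⁻¹' S) P = Prod.map σ σ ⁻¹'
      {p : ℤ × ℤ | p.1 ∈ S ∧ p.2 ∉ S ∧ σ p.1 < σ p.2 ∧ P (p.2 - p.1)} := by
    ext ⟨a, b⟩
    simp [hookPairs, σ, Equiv.swap_apply_self, hP.swap_sub_swap]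
  have hbij : Bijective (Prod.map σ σ) := (Equiv.prodCongr σ σ).bijective
  have hdisj₁ : Disjoint (hookPairs S P)
      ↑({b ∈ Ico u (u + t) | b ∉ S ∧ P (b - u)}.image (u + t, ·)) := by
    simp only [Set.disjoint_left, hookPairs, coe_image, Set.mem_image, mem_coe, mem_filter,
      mem_Ico]
    rintro _ ⟨-, -, hlt, -⟩ ⟨b, ⟨⟨-, hb⟩, -⟩, rfl⟩
    exact hlt.not_gt hb
  have hdisj₂ : Disjoint (hookPairs S P ∪
        ↑({b ∈ Ico u (u + t) | b ∉ S ∧ P (b - u)}.image (u + t, ·)))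
      ↑({a ∈ Ico u (u + t) | a ∈ S ∧ P (u - a)}.image (·, u)) := by
    simp only [Set.disjoint_left, hookPairs, Set.mem_union, coe_image, Set.mem_image, mem_coe,
      mem_filter, mem_Ico]
    rintro _ (⟨-, -, hlt, -⟩ | ⟨b, -, rfl⟩) ⟨a, ⟨⟨ha, ha'⟩, -⟩, h⟩
    · rw [← h] at hlt
      exact hlt.not_ge ha
    · simp only [Prod.mk.injEq] at h
      omega
  rw [hpre, Set.ncard_preimage_of_injective_subset_range hbij.1 (by simp [hbij.2.range_eq]),
    setOf_swap_lt_eq_hookPairs_union ht hP hu hv,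
    Set.ncard_union_eq hdisj₂ (hfin.union (finite_toSet _)), Set.ncard_union_eq hdisj₁ hfin,
    Set.ncard_coe_finset, Set.ncard_coe_finset,
    card_image_of_injective _ (Prod.mk_right_injective _),
    card_image_of_injective _ (Prod.mk_left_injective _)]

lemma ncard_hookPairs_swap_modEq_add_neg (ht : 0 < t) (hu : u ∉ S) (hv : u + t ∈ S) (r : ℤ)
    (hfin : (hookPairs S (· ≡ r [ZMOD t])).Finite)
    (hfin' : (hookPairs S (· ≡ -r [ZMOD t])).Finite) :
    (hookPairs (Equiv.swap u (u + t) ⁻¹' S) (· ≡ r [ZMOD t])).ncard +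
        (hookPairs (Equiv.swap u (u + t) ⁻¹' S) (· ≡ -r [ZMOD t])).ncard =
      (hookPairs S (· ≡ r [ZMOD t])).ncard + (hookPairs S (· ≡ -r [ZMOD t])).ncard + 2 := by
  have hneg : ∀ c a : ℤ, u - a ≡ -c [ZMOD t] ↔ a - u ≡ c [ZMOD t] := fun c a => by
    rw [← neg_sub, Int.neg_modEq_neg]
  have hcount : ∀ c : ℤ, #{b ∈ Ico u (u + t) | b ∉ S ∧ b - u ≡ c [ZMOD t]} +
      #{a ∈ Ico u (u + t) | a ∈ S ∧ u - a ≡ -c [ZMOD t]} = 1 := fun c => by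
    simp only [hneg]
    rw [card_filter_notMem_add_card_filter_mem, Int.card_filter_Ico_sub_modEq ht]
  have h₁ := hcount r
  have h₂ := hcount (-r)
  rw [neg_neg] at h₂
  rw [ncard_hookPairs_swap_preimage ht (Int.periodic_modEq t r) hu hv hfin,
    ncard_hookPairs_swap_preimage ht (Int.periodic_modEq t (-r)) hu hv hfin']
  omega

end Swap

section YoungDiagram

variable {μ : YoungDiagram}

def onePos (μ : YoungDiagram) (j : ℕ) : ℤ := j - μ.colLen j

def zeroPos (μ : YoungDiagram) (i : ℕ) : ℤ := μ.rowLen i - (i + 1)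

lemma onePos_strictMono (μ : YoungDiagram) : StrictMono (onePos μ) :=
  strictMono_nat_of_lt_succ fun j => by
    have := μ.colLen_anti j (j + 1) j.le_succ
    unfold onePos
    omega

lemma zeroPos_strictAnti (μ : YoungDiagram) : StrictAnti (zeroPos μ) :=
  strictAnti_nat_of_succ_lt fun i => by
    have := μ.rowLen_anti i (i + 1) i.le_succ
    unfold zeroPos
    omega

lemma onePos_lt_zeroPos_iff {i j : ℕ} : onePos μ j < zeroPos μ i ↔ (i, j) ∈ μ := by
  unfold onePos zeroPos
  by_cases h : (i, j) ∈ μ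
  · have := μ.mem_iff_lt_rowLen.1 h
    have := μ.mem_iff_lt_colLen.1 h
    simp only [h, iff_true]
    omega
  · have := mt μ.mem_iff_lt_rowLen.2 h
    have := mt μ.mem_iff_lt_colLen.2 h
    simp only [h, iff_false]
    omega

lemma hookLen_eq_zeroPos_sub_onePos {i j : ℕ} (h : (i, j) ∈ μ) :
    (hookLen μ i j : ℤ) = zeroPos μ i - onePos μ j := by
  have := μ.mem_iff_lt_rowLen.1 h
  have := μ.mem_iff_lt_colLen.1 h
  unfold hookLen zeroPos onePos
  omega

lemma not_zOne_iff {a : ℤ} : ¬ ZOne μ a ↔ ∃ i, zeroPos μ i = a := by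
  simp [ZOne, zeroPos, eq_comm]

lemma onePos_ne_zeroPos (i j : ℕ) : onePos μ j ≠ zeroPos μ i := by
  unfold onePos zeroPos
  by_cases h : (i, j) ∈ μ
  · have := μ.mem_iff_lt_rowLen.1 h
    have := μ.mem_iff_lt_colLen.1 h
    omega
  · have := mt μ.mem_iff_lt_rowLen.2 h
    have := mt μ.mem_iff_lt_colLen.2 h
    omega

lemma zOne_onePos (j : ℕ) : ZOne μ (onePos μ j) :=
  fun i => onePos_ne_zeroPos i j

lemma exists_onePos_eq {a : ℤ} (h : ZOne μ a) : ∃ j, onePos μ j = a := by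
  have hex : ∃ j : ℕ, a ≤ onePos μ j := ⟨(a + μ.colLen 0).toNat, by
    have := μ.colLen_anti 0 (a + μ.colLen 0).toNat (Nat.zero_le _)
    unfold onePos
    omega⟩
  obtain ⟨j, hj, hmin⟩ : ∃ j, a ≤ onePos μ j ∧ ∀ m < j, onePos μ m < a :=
    ⟨Nat.find hex, Nat.find_spec hex, fun m hm => not_le.1 (Nat.find_min hex hm)⟩
  refine ⟨j, le_antisymm (not_lt.1 fun hlt => ?_) hj⟩
  -- `a` lies strictly between two consecutive `1`s, so it is the `0` closing row `j - a - 1`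
  unfold onePos at hlt
  obtain ⟨r, hr⟩ : ∃ r : ℕ, (r : ℤ) = j - a - 1 := ⟨(j - a - 1).toNat, by omega⟩
  have hrow_le : μ.rowLen r ≤ j := by
    by_contra hgt
    have := μ.mem_iff_lt_colLen.1 (μ.mem_iff_lt_rowLen.2 (not_le.1 hgt))
    omega
  have hrow_ge : j ≤ μ.rowLen r := by
    rcases Nat.eq_zero_or_pos j with h0 | hpos
    · omega
    · have hprev := hmin (j - 1) (by omega)
      unfold onePos at hprev
      have := μ.mem_iff_lt_rowLen.1 (μ.mem_iff_lt_colLen.2 (show r < μ.colLen (j - 1) by omega))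
      omega
  exact h r (by omega)

lemma zOne_iff {a : ℤ} : ZOne μ a ↔ ∃ j, onePos μ j = a :=
  ⟨exists_onePos_eq, fun ⟨j, hj⟩ => hj ▸ zOne_onePos j⟩

lemma hookPairs_zOne_eq_image (P : ℤ → Prop) [DecidablePred P] :
    hookPairs {a | ZOne μ a} P = (fun c : ℕ × ℕ => (onePos μ c.2, zeroPos μ c.1)) ''
      ↑{c ∈ μ.cells | P (hookLen μ c.1 c.2)} := by
  ext ⟨a, b⟩
  simp only [hookPairs, Set.mem_ofPred_eq, Set.mem_image, coe_filter, Prod.mk.injEq]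
  constructor
  · rintro ⟨ha, hb, hlt, hab⟩
    obtain ⟨j, rfl⟩ := zOne_iff.1 ha
    obtain ⟨i, rfl⟩ := not_zOne_iff.1 hb
    have hij := onePos_lt_zeroPos_iff.1 hlt
    exact ⟨(i, j), ⟨hij, by rwa [hookLen_eq_zeroPos_sub_onePos hij]⟩, rfl, rfl⟩
  · rintro ⟨⟨i, j⟩, ⟨hij, hP⟩, rfl, rfl⟩
    rw [YoungDiagram.mem_cells] at hij
    refine ⟨zOne_onePos j, not_zOne_iff.2 ⟨i, rfl⟩, onePos_lt_zeroPos_iff.2 hij, ?_⟩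
    rwa [← hookLen_eq_zeroPos_sub_onePos hij]

lemma ncard_hookPairs_zOne (P : ℤ → Prop) [DecidablePred P] :
    (hookPairs {a | ZOne μ a} P).ncard = #{c ∈ μ.cells | P (hookLen μ c.1 c.2)} := by
  rw [hookPairs_zOne_eq_image, Set.ncard_image_of_injective _ fun c c' h => ?_,
    Set.ncard_coe_finset]
  simp only [Prod.mk.injEq] at h
  exact Prod.ext ((zeroPos_strictAnti μ).injective h.2) ((onePos_strictMono μ).injective h.1)

lemma finite_hookPairs_zOne (P : ℤ → Prop) [DecidablePred P] :
    (hookPairs {a | ZOne μ a} P).Finite :=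
  hookPairs_zOne_eq_image P ▸ Set.toFinite _

end YoungDiagram

def hookCount (t : ℕ) (r : ℤ) (μ : YoungDiagram) : ℕ :=
  #{c ∈ μ.cells | (hookLen μ c.1 c.2 : ℤ) ≡ r [ZMOD t]}

section Hooks

variable {t : ℕ} {μ ν lam : YoungDiagram}

lemma AddHook.exists_swap (h : AddHook t μ ν) : ∃ u : ℤ, ¬ ZOne μ u ∧ ZOne μ (u + t) ∧
    {a | ZOne ν a} = Equiv.swap u (u + t) ⁻¹' {a | ZOne μ a} := by
  obtain ⟨u, hu, hv, hν⟩ := h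
  have hne : u ≠ u + t := fun h => hu (h ▸ hv)
  refine ⟨u, hu, hv, Set.ext fun a => ?_⟩
  simp only [Set.mem_ofPred_eq, Set.mem_preimage, hν, Equiv.swap_apply_def]
  split_ifs with h₁ h₂
  · simp [h₁, hv]
  · simp [h₂, hu, hne.symm]
  · simp [h₁, h₂]

lemma AddHook.card_eq (ht : 0 < t) (h : AddHook t μ ν) : ν.card = μ.card + t := by
  classical
  obtain ⟨u, hu, hv, hν⟩ := h.exists_swap
  have key := ncard_hookPairs_swap_preimage (P := fun _ => True) (by exact_mod_cast ht)
    (fun _ => rfl) hu hv (finite_hookPairs_zOne _)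
  rw [← hν, ncard_hookPairs_zOne, ncard_hookPairs_zOne] at key
  simp only [and_true, filter_true] at key
  rw [YoungDiagram.card, YoungDiagram.card, key, add_assoc, add_comm #{x ∈ _ | x ∉ _},
    card_filter_add_card_filter_not, Int.card_Ico, add_sub_cancel_left, Int.toNat_natCast]

lemma AddHook.hookCount_add_hookCount_neg (ht : 0 < t) (h : AddHook t μ ν) (r : ℤ) :
    hookCount t r ν + hookCount t (-r) ν = hookCount t r μ + hookCount t (-r) μ + 2 := by
  classical
  obtain ⟨u, hu, hv, hν⟩ := h.exists_swap
  have key := ncard_hookPairs_swap_modEq_add_neg (by exact_mod_cast ht) hu hv r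
    (finite_hookPairs_zOne _) (finite_hookPairs_zOne _)
  rwa [← hν, ncard_hookPairs_zOne, ncard_hookPairs_zOne, ncard_hookPairs_zOne,
    ncard_hookPairs_zOne] at key

lemma GEt.exists_card_and_hookCount_eq (ht : 0 < t) (h : GEt t μ lam) (r : ℤ) : ∃ m : ℕ,
    lam.card = μ.card + m * t ∧
      hookCount t r lam + hookCount t (-r) lam =
        hookCount t r μ + hookCount t (-r) μ + 2 * m := by
  induction h with
  | refl => exact ⟨0, by simp, by simp⟩
  | tail _ hstep ih =>
    obtain ⟨m, hcard, hcount⟩ := ih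
    refine ⟨m + 1, ?_, ?_⟩
    · rw [hstep.card_eq ht, hcard]
      ring
    · rw [hstep.hookCount_add_hookCount_neg ht, hcount]
      ring

end Hooks

end PaperDefs

theorem stmt15_general (t : ℕ) (ht : 1 ≤ t) (μ lam : YoungDiagram)
    (hcore : GEt t μ lam) (n k : ℕ) (hk : k < t)
    (hsize : lam.card = μ.card + n * t) :
    (((lam.cells.filter (fun c => hookLen lam c.1 c.2 % t = k)).card : ℤ)
      + ((lam.cells.filter (fun c => hookLen lam c.1 c.2 % t = (t - k) % t)).card : ℤ))
    - (((μ.cells.filter (fun c => hookLen μ c.1 c.2 % t = k)).card : ℤ)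
      + ((μ.cells.filter (fun c => hookLen μ c.1 c.2 % t = (t - k) % t)).card : ℤ))
      = 2 * (n : ℤ) := by
  obtain ⟨m, hcard, hcount⟩ := hcore.exists_card_and_hookCount_eq ht k
  have hm : m = n := Nat.eq_of_mul_eq_mul_right ht (by omega)
  have hres : ∀ ν : YoungDiagram,
      #{c ∈ ν.cells | hookLen ν c.1 c.2 % t = k} = hookCount t k ν :=
    fun ν => congr_arg card (filter_congr fun _ _ => Nat.mod_eq_iff_intCast_modEq hk)
  have hres' : ∀ ν : YoungDiagram,
      #{c ∈ ν.cells | hookLen ν c.1 c.2 % t = (t - k) % t} = hookCount t (-k) ν :=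
    fun ν => congr_arg card
      (filter_congr fun _ _ => Nat.mod_eq_sub_mod_iff_intCast_modEq_neg hk.le)
  rw [hres, hres, hres', hres', ← Nat.cast_add, ← Nat.cast_add, hcount, hm]
  push_cast
  ring

theorem stmt15 (t : ℕ) (ht : 1 ≤ t) (μ lam : YoungDiagram) (hμ : IsTCore t μ)
    (hcore : GEt t μ lam) (n k : ℕ) (hk : k < t)
    (hsize : lam.card = μ.card + n * t) :
    (((lam.cells.filter (fun c => hookLen lam c.1 c.2 % t = k)).card : ℤ)
      + ((lam.cells.filter (fun c => hookLen lam c.1 c.2 % t = (t - k) % t)).card : ℤ))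
    - (((μ.cells.filter (fun c => hookLen μ c.1 c.2 % t = k)).card : ℤ)
      + ((μ.cells.filter (fun c => hookLen μ c.1 c.2 % t = (t - k) % t)).card : ℤ))
      = 2 * (n : ℤ) :=
  stmt15_general t ht μ lam hcore n k hk hsize
end
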